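/- Let G be a chordal undirected graph and X' ⊆ X ⊆ V_G. Then for every O' ∈ PMEC(G[X']): |MEC(G,O')| = Σ |MEC(G,O)|, where the sum ranges over all O ∈ PMEC(G[X]) with O[X'] = O'. -/

import Mathlib

/-! Common definitions: mixed graphs, Markov equivalence classes (MECs),
partial MECs, projections, extensions, and counting classes. -/

/-- A mixed graph on a vertex type `V`: an irreflexive edge relation. -/
structure MixedGraph (V : Type*) where
  E : V → V → Prop
  irrefl : ∀ v, ¬ E v v

namespace MixedGraph

variable {V : Type*}

/-- `u — v` : undirected edge of `M`. -/
def undirE (M : MixedGraph V) (u v : V) : Prop := M.E u v ∧ M.E v u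

/-- `u → v` : directed edge of `M`. -/
def dirE (M : MixedGraph V) (u v : V) : Prop := M.E u v ∧ ¬ M.E v u

/-- `u` and `v` are adjacent in `M` (joined by some edge). -/
def adjE (M : MixedGraph V) (u v : V) : Prop := M.E u v ∨ M.E v u

/-- The skeleton of a mixed graph: replace every directed edge by an undirected one. -/
def skeleton (M : MixedGraph V) : SimpleGraph V where
  Adj u v := M.adjE u v
  symm := by
    constructor
    intro u v h
    exact Or.symm h
  loopless := by
    constructor
    intro v h
    rcases h with h | h <;> exact M.irrefl v h

/-- The undirected part of a mixed graph, as a simple graph. -/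
def undirGraph (M : MixedGraph V) : SimpleGraph V where
  Adj u v := M.undirE u v
  symm := by
    constructor
    intro u v h
    exact ⟨h.2, h.1⟩
  loopless := by
    constructor
    intro v h
    exact M.irrefl v h.1

/-- `M` is a chain graph: no directed cycle, i.e. no cycle
`u_1, …, u_l, u_1` (`l ≥ 2`, vertices distinct) in which every consecutive pair is joined
by an undirected or forward-directed edge and at least one edge is directed. -/
def IsChainGraph (M : MixedGraph V) : Prop :=
  ∀ (l : ℕ) (f : ZMod l → V), 2 ≤ l → Function.Injective f →
    (∀ i, M.E (f i) (f (i + 1))) → ∀ i, ¬ M.dirE (f i) (f (i + 1))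

/-- `a → b ← c` is a v-structure of `M` (in particular `a`, `c` non-adjacent). -/
def vstruct (M : MixedGraph V) (a b c : V) : Prop :=
  M.dirE a b ∧ M.dirE c b ∧ ¬ M.adjE a c

/-- The set of v-structures of `M`, as ordered triples `(a, b, c)` with `a → b ← c`. -/
def vstructs (M : MixedGraph V) : Set (V × V × V) :=
  {t | M.vstruct t.1 t.2.1 t.2.2}

/-- The directed edge `u → v` is strongly protected in `M`: it occurs in an induced
subgraph of one of the four forms (a) `w→u→v` (`w`,`v` non-adjacent);
(b) `u→v←w` (`u`,`w` non-adjacent); (c) `u→w`, `w→v`, `u→v`;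
(d) `w→v`, `w'→v`, `w—u`, `w'—u`, `u→v` (`w`,`w'` non-adjacent). -/
def StronglyProtected (M : MixedGraph V) (u v : V) : Prop :=
  (∃ w, M.dirE w u ∧ ¬ M.adjE w v) ∨
  (∃ w, M.dirE w v ∧ ¬ M.adjE u w) ∨
  (∃ w, M.dirE u w ∧ M.dirE w v) ∨
  (∃ w w', w ≠ w' ∧ M.undirE w u ∧ M.undirE w' u ∧ M.dirE w v ∧ M.dirE w' v ∧
    ¬ M.adjE w w')

/-- The induced mixed subgraph of `M` on the vertex set `X`, kept on the same vertex
type (vertices outside `X` become isolated). -/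
def induce (M : MixedGraph V) (X : Set V) : MixedGraph V where
  E u v := u ∈ X ∧ v ∈ X ∧ M.E u v
  irrefl := by
    intro v h
    exact M.irrefl v h.2.2

end MixedGraph

namespace SimpleGraph

variable {V : Type*}

/-- A simple graph is chordal: every cycle of length at least `4` has a chord
(an edge between two non-consecutive vertices of the cycle). -/
def IsChordalGraph (G : SimpleGraph V) : Prop :=
  ∀ (l : ℕ) (f : ZMod l → V), 4 ≤ l → Function.Injective f →
    (∀ i, G.Adj (f i) (f (i + 1))) →
    ∃ i j : ZMod l, j ≠ i + 1 ∧ i ≠ j + 1 ∧ G.Adj (f i) (f j)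

/-- The induced subgraph of `G` on the vertex set `X`, kept on the same vertex type
(vertices outside `X` become isolated). -/
def inducedOn (G : SimpleGraph V) (X : Set V) : SimpleGraph V where
  Adj u v := u ∈ X ∧ v ∈ X ∧ G.Adj u v
  symm := by
    constructor
    intro u v h
    exact ⟨h.2.1, h.1, h.2.2.symm⟩
  loopless := by
    constructor
    intro v h
    exact G.loopless.1 v h.2.2

/-- The set of neighbours in `G` of vertices of `S`. -/
def nbhdSet (G : SimpleGraph V) (S : Set V) : Set V :=
  {v | ∃ u ∈ S, G.Adj u v}

/-- View an undirected graph as a mixed graph all of whose edges are undirected. -/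
def toMixed (G : SimpleGraph V) : MixedGraph V :=
  ⟨G.Adj, fun v h => G.loopless.1 v h⟩

end SimpleGraph

namespace MixedGraph

variable {V : Type*}

/-- `M` is (the graphical representation of) a Markov equivalence class, by the
Andersson–Madigan–Perlman characterization: (1) `M` is a chain graph; (2) every
undirected connected component of `M` is chordal; (3) `M` has no induced subgraph
`a→b—c`; (4) every directed edge of `M` is strongly protected. -/
def IsMEC (M : MixedGraph V) : Prop :=
  M.IsChainGraph ∧
  M.undirGraph.IsChordalGraph ∧
  (∀ a b c, M.dirE a b → M.undirE b c → M.adjE a c) ∧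
  (∀ u v, M.dirE u v → M.StronglyProtected u v)

/-- `M` is a partial MEC: conditions (1)–(3) of the MEC characterization. -/
def IsPartialMEC (M : MixedGraph V) : Prop :=
  M.IsChainGraph ∧
  M.undirGraph.IsChordalGraph ∧
  (∀ a b c, M.dirE a b → M.undirE b c → M.adjE a c)

end MixedGraph

/-- `MEC(G)` : the set of MECs with skeleton `G`. -/
def MECset {V : Type*} (G : SimpleGraph V) : Set (MixedGraph V) :=
  {M | M.IsMEC ∧ M.skeleton = G}

/-- `PMEC(G)` : the set of partial MECs with skeleton `G`. -/
def PMECset {V : Type*} (G : SimpleGraph V) : Set (MixedGraph V) :=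
  {M | M.IsPartialMEC ∧ M.skeleton = G}

/-- `M' = P(M, Y)` : `M'` is the projection of `M` on the vertex set `Y`, i.e. the
(unique) MEC of the induced subgraph on `Y` whose set of v-structures equals that
of `M[Y]`. -/
def IsProjection {V : Type*} (M : MixedGraph V) (Y : Set V) (M' : MixedGraph V) : Prop :=
  M' ∈ MECset (M.skeleton.inducedOn Y) ∧ M'.vstructs = (M.induce Y).vstructs

/-- `MEC(G, r, 1)` : MECs of `G` that contain a directed edge into `r`. -/
def MEC1 {V : Type*} (G : SimpleGraph V) (r : V) : Set (MixedGraph V) :=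
  {M ∈ MECset G | ∃ x, M.dirE x r}

/-- `MEC(G, r, 0, i)` : MECs of `G` with no directed edge into `r` and exactly `i`
undirected edges incident to `r`. -/
def MEC0 {V : Type*} (G : SimpleGraph V) (r : V) (i : ℕ) : Set (MixedGraph V) :=
  {M ∈ MECset G | (¬ ∃ x, M.dirE x r) ∧ {x | M.undirE r x}.ncard = i}

/-- The degree of `r` in `G`. -/
noncomputable def degS {V : Type*} (G : SimpleGraph V) (r : V) : ℕ :=
  {x | G.Adj r x}.ncard

/-- `n_1(G, r) = |MEC(G, r, 1)|`. -/
noncomputable def n1count {V : Type*} (G : SimpleGraph V) (r : V) : ℕ :=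
  (MEC1 G r).ncard

/-- `n_0^i(G, r) = |MEC(G, r, 0, i)|`. -/
noncomputable def n0count {V : Type*} (G : SimpleGraph V) (r : V) (i : ℕ) : ℕ :=
  (MEC0 G r i).ncard

/-- `n_0(G, r) = Σ_{i = 0}^{δ} n_0^i(G, r)`, where `δ` is the degree of `r` in `G`. -/
noncomputable def n0total {V : Type*} (G : SimpleGraph V) (r : V) : ℕ :=
  ∑ i ∈ Finset.range (degS G r + 1), n0count G r i

/-- The set of vertices lying on the `r1` side after cutting the edge `r1 — r2` of `G`
(i.e. the vertices reachable from `r1` in `G` with the edge `r1 — r2` deleted). -/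
def cutSide {V : Type*} (G : SimpleGraph V) (r1 r2 : V) : Set V :=
  {v | (G.deleteEdges {s(r1, r2)}).Reachable r1 v}

/-- `MEC(G, O)` : the MECs of `G` whose induced subgraph on `X` (the vertex set of
`O`) equals `O`. -/
def MECwith {V : Type*} (G : SimpleGraph V) (O : MixedGraph V) (X : Set V) :
    Set (MixedGraph V) :=
  {M ∈ MECset G | M.induce X = O}

/-- `O ∈ E(O1, O2)` : `O` is an extension of `(O1, O2)` (where `X1`, `X2` are the
vertex sets of `O1`, `O2`): for each `a ∈ {1,2}`, (i) every directed edge of `O_a` is a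
directed edge of `O`; (ii) `V(O_a) = V(O[V_{O_a}])`; (iii) every undirected edge of
`O_a` that is directed in `O` is strongly protected in `O`. -/
def IsExtension {V : Type*} (O O1 O2 : MixedGraph V) (X1 X2 : Set V) : Prop :=
  (∀ u v, O1.dirE u v → O.dirE u v) ∧
  (∀ u v, O2.dirE u v → O.dirE u v) ∧
  O1.vstructs = (O.induce X1).vstructs ∧
  O2.vstructs = (O.induce X2).vstructs ∧
  (∀ u v, O1.undirE u v → O.dirE u v → O.StronglyProtected u v) ∧
  (∀ u v, O2.undirE u v → O.dirE u v → O.StronglyProtected u v)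

/-- The v-structure (recorded as the ordered triple `t = (a, b, c)` with `a → b ← c`)
contains the directed edge `x → y`. -/
def vstructContains {V : Type*} (t : V × V × V) (x y : V) : Prop :=
  (t.1 = x ∧ t.2.1 = y) ∨ (t.2.2 = x ∧ t.2.1 = y)

/-! Restriction `M ↦ M[X]` sends `MEC(G, O')` into the partial MECs `O` of `G[X]` with
`O[X'] = O'`, because an MEC restricts to a partial MEC and `(M[X])[X'] = M[X']`; its fibre over
`O` is exactly `MEC(G, O)`, so counting `MEC(G, O')` fibre by fibre gives the formula. -/

open Finset in
theorem Set.ncard_eq_finsum_mem_ncard_fiber {α β : Type*} {s : Set α} {t : Set β} {f : α → β}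
    (hs : s.Finite) (hf : Set.MapsTo f s t) :
    s.ncard = ∑ᶠ b ∈ t, {a ∈ s | f a = b}.ncard := by
  classical
  have hfiber (b : β) : {a ∈ s | f a = b}.ncard = #{a ∈ hs.toFinset | f a = b} := by
    rw [← Set.ncard_coe_finset]
    congr 1
    ext a
    simp
  rw [finsum_mem_eq_sum_of_subset _ (t := hs.toFinset.image f)]
  · rw [Set.ncard_eq_toFinset_card s hs, Finset.card_eq_sum_card_fiberwise
      (fun a ha => Finset.mem_coe.2 (Finset.mem_image_of_mem f ha))]
    exact Finset.sum_congr rfl fun b _ => (hfiber b).symm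
  · rintro b ⟨-, hb⟩
    simpa using (Set.fiber_ncard_ne_zero_iff_mem_image hs).1 hb
  · simpa using hf.image_subset

namespace MixedGraph

variable {V : Type*}

theorem E_injective : Function.Injective (E : MixedGraph V → V → V → Prop) := by
  rintro ⟨E, _⟩ ⟨E', _⟩ rfl
  rfl

instance [Finite V] : Finite (MixedGraph V) :=
  Finite.of_injective _ E_injective

theorem induce_induce (M : MixedGraph V) {X' X : Set V} (h : X' ⊆ X) :
    (M.induce X).induce X' = M.induce X' :=
  E_injective <| by
    funext u v
    simp only [induce, eq_iff_iff]
    exact ⟨fun ⟨hu, hv, _, _, he⟩ => ⟨hu, hv, he⟩, fun ⟨hu, hv, he⟩ => ⟨hu, hv, h hu, h hv, he⟩⟩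

theorem skeleton_induce (M : MixedGraph V) (X : Set V) :
    (M.induce X).skeleton = M.skeleton.inducedOn X := by
  ext u v
  simp only [skeleton, adjE, induce, SimpleGraph.inducedOn]
  tauto

theorem dirE_induce {M : MixedGraph V} {X : Set V} {u v : V} :
    (M.induce X).dirE u v ↔ u ∈ X ∧ v ∈ X ∧ M.dirE u v := by
  simp only [dirE, induce]
  tauto

theorem undirE_induce {M : MixedGraph V} {X : Set V} {u v : V} :
    (M.induce X).undirE u v ↔ u ∈ X ∧ v ∈ X ∧ M.undirE u v := by
  simp only [undirE, induce]
  tauto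

theorem IsChainGraph.induce {M : MixedGraph V} (h : M.IsChainGraph) (X : Set V) :
    (M.induce X).IsChainGraph := fun l f hl hf hE i hdir =>
  h l f hl hf (fun j => (hE j).2.2) i (dirE_induce.1 hdir).2.2

theorem IsPartialMEC.induce {M : MixedGraph V} (h : M.IsPartialMEC) (X : Set V) :
    (M.induce X).IsPartialMEC := by
  obtain ⟨hchain, hchordal, hflag⟩ := h
  refine ⟨hchain.induce X, fun l f hl hf hE => ?_, fun a b c hab hbc => ?_⟩
  · have hX (i : ZMod l) : f i ∈ X := (undirE_induce.1 (hE i)).1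
    obtain ⟨i, j, hij, hji, hadj⟩ := hchordal l f hl hf fun i => (undirE_induce.1 (hE i)).2.2
    exact ⟨i, j, hij, hji, undirE_induce.2 ⟨hX i, hX j, hadj⟩⟩
  · obtain ⟨ha, -, hab⟩ := dirE_induce.1 hab
    obtain ⟨-, hc, hbc⟩ := undirE_induce.1 hbc
    rcases hflag a b c hab hbc with h | h
    · exact Or.inl ⟨ha, hc, h⟩
    · exact Or.inr ⟨hc, ha, h⟩

theorem IsMEC.isPartialMEC {M : MixedGraph V} (h : M.IsMEC) : M.IsPartialMEC :=
  ⟨h.1, h.2.1, h.2.2.1⟩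

end MixedGraph

theorem induce_mem_PMECset {V : Type*} {G : SimpleGraph V} {M : MixedGraph V}
    (hM : M ∈ MECset G) (X : Set V) : M.induce X ∈ PMECset (G.inducedOn X) :=
  ⟨hM.1.isPartialMEC.induce X, by rw [M.skeleton_induce, hM.2]⟩

theorem sep_MECwith_induce_eq {V : Type*} {G : SimpleGraph V} {O O' : MixedGraph V}
    {X' X : Set V} (hsub : X' ⊆ X) (hO : O.induce X' = O') :
    {M ∈ MECwith G O' X' | M.induce X = O} = MECwith G O X := by
  ext M
  constructor
  · rintro ⟨⟨hM, -⟩, hMO⟩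
    exact ⟨hM, hMO⟩
  · rintro ⟨hM, hMO⟩
    exact ⟨⟨hM, by rw [← M.induce_induce hsub, hMO, hO]⟩, hMO⟩

theorem counting_formula_MEC_G_O'_general {V : Type*} [Fintype V]
    (G : SimpleGraph V)
    (X' X : Set V) (hsub : X' ⊆ X)
    (O' : MixedGraph V) :
    (MECwith G O' X').ncard =
      ∑ᶠ O ∈ {O : MixedGraph V |
          O ∈ PMECset (G.inducedOn X) ∧ O.induce X' = O'},
        (MECwith G O X).ncard := by
  have hrestrict : Set.MapsTo (MixedGraph.induce · X) (MECwith G O' X')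
      {O | O ∈ PMECset (G.inducedOn X) ∧ O.induce X' = O'} := fun M ⟨hM, hMO'⟩ =>
    ⟨induce_mem_PMECset hM X, by rw [M.induce_induce hsub, hMO']⟩
  rw [Set.ncard_eq_finsum_mem_ncard_fiber (Set.toFinite _) hrestrict]
  exact finsum_mem_congr rfl fun O hO => by rw [sep_MECwith_induce_eq hsub hO.2]

theorem counting_formula_MEC_G_O' {V : Type*} [Fintype V] [DecidableEq V]
    (G : SimpleGraph V) (hchordal : G.IsChordalGraph)
    (X' X : Set V) (hsub : X' ⊆ X)
    (O' : MixedGraph V) (hO' : O' ∈ PMECset (G.inducedOn X')) :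
    (MECwith G O' X').ncard =
      ∑ᶠ O ∈ {O : MixedGraph V |
          O ∈ PMECset (G.inducedOn X) ∧ O.induce X' = O'},
        (MECwith G O X).ncard :=
  counting_formula_MEC_G_O'_general G X' X hsub O'
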